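/- arXiv:1806.11282 — 3 statements merged into one kernel-verified Lean document; each statement's English description precedes it below -/
import Mathlib

section
/- Let G = (V,E) be a finite graph with edge weights ω_e ∈ [-π,π] and vertex weights υ_v ∈ [-π,π], and let H = -Σ_{{u,v}∈E} ω_{uv} X_u X_v - Σ_v υ_v X_v be the corresponding Hamiltonian on (ℂ²)^{⊗V}, where X is the Pauli-X matrix. Then ⟨0^{|V|}| exp(-iH) |0^{|V|}⟩ = 2^{-|V|} · Z_Ising(G; iω, iυ), where Z_Ising(G; iω, iυ) = Σ_{σ∈{-1,+1}^V} exp(i Σ_{{u,v}∈E} ω_{uv} σ_u σ_v + i Σ_v υ_v σ_v). -/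
set_option linter.unusedSectionVars false

open scoped BigOperators

variable (V : Type) [Fintype V] [DecidableEq V]

/-- Flip the bit at position `v`. -/
def bitFlip (v : V) (y : V → Fin 2) : V → Fin 2 := Function.update y v (1 - y v)

/-- The Pauli-X matrix acting on qubit `v` of `(ℂ²)^{⊗V}`, in the computational
basis indexed by `V → Fin 2`. -/
def pauliX (v : V) : Matrix (V → Fin 2) (V → Fin 2) ℂ :=
  Matrix.of fun x y => if x = bitFlip V v y then 1 else 0

lemma bitFlip_comm (u v : V) (y : V → Fin 2) :
    bitFlip V u (bitFlip V v y) = bitFlip V v (bitFlip V u y) := by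
  by_cases h : u = v
  · subst h; rfl
  · funext w
    by_cases h1 : w = u <;> by_cases h2 : w = v <;>
      simp [bitFlip, Function.update_apply, h1, h2, h, Ne.symm h]
  
lemma pauliX_mul_apply (u v : V) (x y : V → Fin 2) :
    (pauliX V u * pauliX V v) x y = if x = bitFlip V u (bitFlip V v y) then 1 else 0 := by
  rw [Matrix.mul_apply]
  rw [Finset.sum_eq_single (bitFlip V v y)]
  · simp [pauliX]
  · intro z _ hz; simp [pauliX, hz]
  · intro h; exact absurd (Finset.mem_univ _) h

lemma pauliX_mul_comm (u v : V) : pauliX V u * pauliX V v = pauliX V v * pauliX V u := by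
  ext x y
  rw [pauliX_mul_apply, pauliX_mul_apply, bitFlip_comm]

/-- The two-qubit operator `X_u X_v` associated to an unordered pair `{u, v}`. -/
noncomputable def pauliXX (e : Sym2 V) : Matrix (V → Fin 2) (V → Fin 2) ℂ :=
  Sym2.lift ⟨fun u v => pauliX V u * pauliX V v, fun u v => pauliX_mul_comm V u v⟩ e

/-- The IQP Hamiltonian `H = -∑_{{u,v}∈E} ω_{uv} X_u X_v - ∑_v υ_v X_v`. -/
noncomputable def iqpHamiltonian (E : Finset (Sym2 V)) (ω : Sym2 V → ℝ) (υ : V → ℝ) :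
    Matrix (V → Fin 2) (V → Fin 2) ℂ :=
  -(∑ e ∈ E, (ω e : ℂ) • pauliXX V e) - ∑ v : V, (υ v : ℂ) • pauliX V v

/-- Spin `±1` of a basis state of one qubit (`0 ↦ +1`, `1 ↦ -1`). -/
noncomputable def spinσ (i : Fin 2) : ℂ := if i = 0 then 1 else -1

/-- Product of the spins of the two endpoints of an unordered pair. -/
noncomputable def spinPairσ (s : Sym2 (Fin 2)) : ℂ := if s.IsDiag then 1 else -1


/-!
The Hadamard transform `U`, with entries `U x σ = (-1)^{x·σ}`, diagonalises every `X_v`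
simultaneously (`X_v U = U diag(σ_v)`), so `H U = U diag(E)` with `E(σ)` the classical Ising
energy of `σ`. Since `U U = 2^{|V|}`, this gives `exp(-iH) = 2^{-|V|} U diag(e^{-iE(σ)}) U`, and
the row and column of `U` at `0^{|V|}` consist of ones.
-/

open Matrix

section Intertwining

variable {n R : Type*} [Fintype n] [DecidableEq n]

theorem Matrix.sum_smul_mul_eq_mul_diagonal [CommSemiring R] {ι : Type*} (s : Finset ι)
    (c : ι → R) {A : ι → Matrix n n R} {d : ι → n → R} {U : Matrix n n R}
    (h : ∀ i ∈ s, A i * U = U * diagonal (d i)) :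
    (∑ i ∈ s, c i • A i) * U = U * diagonal (∑ i ∈ s, c i • d i) := by
  rw [Finset.sum_mul, ← diagonalAddMonoidHom_apply, map_sum, Finset.mul_sum]
  refine Finset.sum_congr rfl fun i hi => ?_
  rw [smul_mul_assoc, h i hi, diagonalAddMonoidHom_apply, diagonal_smul, mul_smul_comm]

theorem Matrix.exp_eq_mul_diagonal_exp_mul [NormedCommRing R] [NormedAlgebra ℚ R]
    [CompleteSpace R] {A U W : Matrix n n R} {d : n → R}
    (hAU : A * U = U * diagonal d) (hUW : U * W = 1) :
    NormedSpace.exp A = U * diagonal (NormedSpace.exp d) * W := by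
  have hdet : IsUnit U.det := isUnit_det_of_right_inverse hUW
  have hA : A = U * diagonal d * U⁻¹ := by rw [← hAU, mul_nonsing_inv_cancel_right _ _ hdet]
  rw [hA, exp_conj _ _ ((isUnit_iff_isUnit_det U).mpr hdet), exp_diagonal, inv_eq_right_inv hUW]

end Intertwining

noncomputable def hadamardSign (a b : Fin 2) : ℂ := if a = 1 ∧ b = 1 then -1 else 1

noncomputable def hadamardMatrix : Matrix (V → Fin 2) (V → Fin 2) ℂ :=
  of fun x σ => ∏ v, hadamardSign (x v) (σ v)

noncomputable def isingEnergy (E : Finset (Sym2 V)) (ω : Sym2 V → ℝ) (υ : V → ℝ)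
    (σ : V → Fin 2) : ℂ :=
  -(∑ e ∈ E, (ω e : ℂ) * spinPairσ (e.map σ)) - ∑ v : V, (υ v : ℂ) * spinσ (σ v)

@[simp]
theorem hadamardSign_zero_left (b : Fin 2) : hadamardSign 0 b = 1 := by
  simp [hadamardSign]

@[simp]
theorem hadamardSign_zero_right (a : Fin 2) : hadamardSign a 0 = 1 := by
  simp [hadamardSign]

theorem hadamardSign_one_sub_left (a b : Fin 2) :
    hadamardSign (1 - a) b = spinσ b * hadamardSign a b := by
  fin_cases a <;> fin_cases b <;> norm_num [hadamardSign, spinσ]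

theorem sum_hadamardSign_mul_hadamardSign (a b : Fin 2) :
    ∑ s, hadamardSign a s * hadamardSign s b = if a = b then 2 else 0 := by
  fin_cases a <;> fin_cases b <;> norm_num [hadamardSign, Fin.sum_univ_two]

theorem spinσ_mul_spinσ (a b : Fin 2) : spinσ a * spinσ b = spinPairσ s(a, b) := by
  fin_cases a <;> fin_cases b <;> norm_num [spinσ, spinPairσ]

section Hadamard

variable {V}

omit [Fintype V] in
theorem bitFlip_bitFlip (v : V) (y : V → Fin 2) : bitFlip V v (bitFlip V v y) = y := by
  funext w
  by_cases h : w = v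
  · subst h
    simp [bitFlip]
  · simp [bitFlip, h]

theorem pauliX_apply_bitFlip (v : V) (x : V → Fin 2) : pauliX V v x (bitFlip V v x) = 1 := by
  simp [pauliX, bitFlip_bitFlip]

theorem pauliX_apply_of_ne_bitFlip {v : V} {x y : V → Fin 2} (h : y ≠ bitFlip V v x) :
    pauliX V v x y = 0 := by
  have : x ≠ bitFlip V v y := fun hx => h (by rw [hx, bitFlip_bitFlip])
  simp [pauliX, this]

theorem hadamardMatrix_bitFlip_apply (v : V) (x σ : V → Fin 2) :
    hadamardMatrix V (bitFlip V v x) σ = spinσ (σ v) * hadamardMatrix V x σ := by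
  simp only [hadamardMatrix, of_apply, bitFlip]
  rw [Finset.prod_congr rfl fun w _ =>
      Function.apply_update (fun w a => hadamardSign a (σ w)) x v (1 - x v) w,
    Finset.prod_update_of_mem (Finset.mem_univ v), hadamardSign_one_sub_left,
    Fintype.prod_eq_mul_prod_compl v, Finset.compl_eq_univ_sdiff, mul_assoc]

omit [DecidableEq V] in
@[simp]
theorem hadamardMatrix_zero_left (σ : V → Fin 2) : hadamardMatrix V (fun _ => 0) σ = 1 := by
  simp [hadamardMatrix]

omit [DecidableEq V] in
@[simp]
theorem hadamardMatrix_zero_right (x : V → Fin 2) : hadamardMatrix V x (fun _ => 0) = 1 := by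
  simp [hadamardMatrix]

theorem pauliX_mul_hadamardMatrix (v : V) :
    pauliX V v * hadamardMatrix V = hadamardMatrix V * diagonal (fun σ => spinσ (σ v)) := by
  ext x σ
  rw [mul_apply, mul_diagonal, Fintype.sum_eq_single (bitFlip V v x)
      fun y hy => by rw [pauliX_apply_of_ne_bitFlip hy, zero_mul],
    pauliX_apply_bitFlip, one_mul, hadamardMatrix_bitFlip_apply, mul_comm]

theorem pauliXX_mul_hadamardMatrix (e : Sym2 V) :
    pauliXX V e * hadamardMatrix V
      = hadamardMatrix V * diagonal (fun σ => spinPairσ (e.map σ)) := by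
  induction e using Sym2.ind with
  | _ u v =>
    change pauliX V u * pauliX V v * _ = _
    rw [mul_assoc, pauliX_mul_hadamardMatrix, ← mul_assoc, pauliX_mul_hadamardMatrix, mul_assoc,
      diagonal_mul_diagonal]
    simp only [spinσ_mul_spinσ, Sym2.map_mk]

theorem hadamardMatrix_mul_hadamardMatrix :
    hadamardMatrix V * hadamardMatrix V = (2 : ℂ) ^ Fintype.card V • 1 := by
  ext x y
  have hprod : (hadamardMatrix V * hadamardMatrix V) x y
      = ∏ v, ∑ s, hadamardSign (x v) s * hadamardSign s (y v) := by
    simp only [mul_apply, hadamardMatrix, of_apply, Fintype.prod_sum, Finset.prod_mul_distrib]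
  rw [hprod, Matrix.smul_apply, one_apply]
  simp_rw [sum_hadamardSign_mul_hadamardSign]
  by_cases hxy : x = y
  · simp [hxy]
  · obtain ⟨v, hv⟩ := Function.ne_iff.mp hxy
    rw [if_neg hxy, smul_zero]
    exact Finset.prod_eq_zero (Finset.mem_univ v) (if_neg hv)

theorem hadamardMatrix_mul_diagonal_mul_hadamardMatrix_apply_zero (f : (V → Fin 2) → ℂ) :
    (hadamardMatrix V * diagonal f * hadamardMatrix V) (fun _ => 0) (fun _ => 0) = ∑ σ, f σ := by
  rw [mul_apply]
  simp only [mul_diagonal, hadamardMatrix_zero_left, hadamardMatrix_zero_right, one_mul, mul_one]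

theorem iqpHamiltonian_mul_hadamardMatrix (E : Finset (Sym2 V)) (ω : Sym2 V → ℝ) (υ : V → ℝ) :
    iqpHamiltonian V E ω υ * hadamardMatrix V
      = hadamardMatrix V * diagonal (isingEnergy V E ω υ) := by
  have hE := sum_smul_mul_eq_mul_diagonal E (fun e => (ω e : ℂ))
    fun e _ => pauliXX_mul_hadamardMatrix e
  have hυ := sum_smul_mul_eq_mul_diagonal Finset.univ (fun v => (υ v : ℂ))
    fun v _ => pauliX_mul_hadamardMatrix v
  rw [iqpHamiltonian, sub_mul, neg_mul, hE, hυ, ← mul_neg, ← mul_sub, diagonal_neg,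
    diagonal_sub]
  congr 2
  ext σ
  simp [isingEnergy]

end Hadamard

theorem iqp_amplitude_eq_ising (E : Finset (Sym2 V)) (ω : Sym2 V → ℝ) (υ : V → ℝ) :
    (NormedSpace.exp ((-Complex.I) • iqpHamiltonian V E ω υ))
        (fun _ => 0) (fun _ => 0) =
      ((2 : ℂ) ^ Fintype.card V)⁻¹ *
        ∑ σ : V → Fin 2, Complex.exp (Complex.I * (∑ e ∈ E, (ω e : ℂ) * spinPairσ (e.map σ))
          + Complex.I * ∑ v : V, (υ v : ℂ) * spinσ (σ v)) := by
  have hUW : hadamardMatrix V * (((2 : ℂ) ^ Fintype.card V)⁻¹ • hadamardMatrix V) = 1 := by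
    rw [mul_smul_comm, hadamardMatrix_mul_hadamardMatrix, smul_smul,
      inv_mul_cancel₀ (pow_ne_zero _ two_ne_zero), one_smul]
  have hAU : (-Complex.I) • iqpHamiltonian V E ω υ * hadamardMatrix V
      = hadamardMatrix V * diagonal ((-Complex.I) • isingEnergy V E ω υ) := by
    rw [smul_mul_assoc, iqpHamiltonian_mul_hadamardMatrix, diagonal_smul, mul_smul_comm]
  rw [exp_eq_mul_diagonal_exp_mul hAU hUW, mul_smul_comm, Matrix.smul_apply, smul_eq_mul,
    hadamardMatrix_mul_diagonal_mul_hadamardMatrix_apply_zero]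
  congr 1
  refine Fintype.sum_congr _ _ fun σ => ?_
  rw [Pi.coe_exp, ← Complex.exp_eq_exp_ℂ, Pi.smul_apply, isingEnergy, smul_eq_mul]
  congr 1
  ring
end

section
/- With notation as above, the coefficient of z^n in P(G,S,k;z) := m^{-|V∖S|} · Hom_M(G,S,k;A(z)) equals Σ over n-element edge subsets F ⊆ E of m^{-|V(G[F])∖S|} · Σ_{φ : V(G[F]) → [m], φ(t)=k for all t ∈ S∩V(G[F])} ∏_{{u,v}∈F} (a^{{u,v}}_{φ(u)φ(v)} - 1), where G[F] is the subgraph induced by the edge set F (with vertex set ∪F). -/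
open scoped BigOperators

/-- The restricted multivariate graph homomorphism partition function with matrices
`A(z) = (1 + z(a^e_{ij} - 1))`; symmetric matrices are encoded as functions on
unordered pairs `Sym2 (Fin m)`. -/
noncomputable def homRestricted (V : Type) [Fintype V] [DecidableEq V] (m : ℕ)
    (E : Finset (Sym2 V)) (a : Sym2 V → Sym2 (Fin m) → ℂ) (S : Finset V) (k : Fin m)
    (z : ℂ) : ℂ :=
  ∑ φ ∈ Finset.univ.filter (fun φ : V → Fin m => ∀ s ∈ S, φ s = k),
    ∏ e ∈ E, (1 + z * (a e (e.map φ) - 1))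

/-- The vertex set `V(G[F])` of the subgraph induced by an edge subset `F`: the set of
vertices covered by some edge of `F`. -/
noncomputable def coveredVerts (V : Type) [Fintype V] [DecidableEq V]
    (F : Finset (Sym2 V)) : Finset V :=
  Finset.univ.filter fun v => ∃ e ∈ F, v ∈ e

/-- the coefficient of `z^n` in
`P(G,S,k;z) = m^{-|V∖S|} Hom_M(G,S,k;A(z))` equals the sum over `n`-element edge
subsets `F ⊆ E` of `m^{-|V(G[F])∖S|}` times the sum over maps
`φ : V(G[F]) → [m]` with `φ = k` on `S ∩ V(G[F])` of `∏_{{u,v}∈F} (a^{{u,v}}_{φ(u)φ(v)} - 1)`.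
(In the product, `φ` is read off through an arbitrary extension to `V`; every endpoint
of an edge of `F` lies in `V(G[F])`, so only the values of `φ` are used.) -/
theorem homRestricted_coeff (V : Type) [Fintype V] [DecidableEq V] (m : ℕ) (hm : 1 ≤ m)
    (E : Finset (Sym2 V)) (a : Sym2 V → Sym2 (Fin m) → ℂ) (S : Finset V) (k : Fin m)
    (P : Polynomial ℂ)
    (hP : ∀ z : ℂ, P.eval z = ((m : ℂ) ^ (Sᶜ.card))⁻¹ * homRestricted V m E a S k z)
    (n : ℕ) :
    P.coeff n = ∑ F ∈ E.powersetCard n,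
      ((m : ℂ) ^ ((coveredVerts V F \ S).card))⁻¹ *
        ∑ φ ∈ Finset.univ.filter
            (fun φ : {x // x ∈ coveredVerts V F} → Fin m =>
              ∀ t : {x // x ∈ coveredVerts V F}, (t : V) ∈ S → φ t = k),
          ∏ e ∈ F, (a e (e.map (fun v : V =>
            if h : v ∈ coveredVerts V F then φ ⟨v, h⟩ else k)) - 1) := by
  classical
  have key : P = Polynomial.C ((m : ℂ) ^ Sᶜ.card)⁻¹ *
      ∑ φ ∈ Finset.univ.filter (fun φ : V → Fin m => ∀ s ∈ S, φ s = k),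
        ∏ e ∈ E, (1 + Polynomial.C (a e (e.map φ) - 1) * Polynomial.X) := by
    apply Polynomial.funext
    intro z
    rw [hP]
    simp only [Polynomial.eval_mul, Polynomial.eval_C, Polynomial.eval_finset_sum,
      Polynomial.eval_prod, Polynomial.eval_add, Polynomial.eval_one, Polynomial.eval_mul,
      Polynomial.eval_X, homRestricted]
    simp [mul_comm]
  rw [key, Polynomial.coeff_C_mul, Polynomial.finset_sum_coeff]
  have hcoeff : ∀ φ : V → Fin m,
      (∏ e ∈ E, (1 + Polynomial.C (a e (e.map φ) - 1) * Polynomial.X)).coeff n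
        = ∑ F ∈ E.powersetCard n, ∏ e ∈ F, (a e (e.map φ) - 1) := by
    intro φ
    have h1 : ∏ e ∈ E, (1 + Polynomial.C (a e (e.map φ) - 1) * Polynomial.X)
        = ∑ t ∈ E.powerset,
            Polynomial.C (∏ e ∈ t, (a e (e.map φ) - 1)) * Polynomial.X ^ t.card := by
      calc ∏ e ∈ E, (1 + Polynomial.C (a e (e.map φ) - 1) * Polynomial.X)
          = ∏ e ∈ E, (Polynomial.C (a e (e.map φ) - 1) * Polynomial.X + 1) := by
            simp [add_comm]
        _ = ∑ t ∈ E.powerset,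
              (∏ e ∈ t, Polynomial.C (a e (e.map φ) - 1) * Polynomial.X) * ∏ e ∈ E \ t, 1 :=
            Finset.prod_add _ _ _
        _ = _ := by
            refine Finset.sum_congr rfl fun t ht => ?_
            rw [Finset.prod_const_one, mul_one, Finset.prod_mul_distrib,
              Finset.prod_const, map_prod]
    rw [h1, Polynomial.finset_sum_coeff, Finset.powersetCard_eq_filter, Finset.sum_filter]
    refine Finset.sum_congr rfl fun t ht => ?_
    rw [Polynomial.coeff_C_mul, Polynomial.coeff_X_pow]
    by_cases h : t.card = n
    · simp [h]
    · simp [h, Ne.symm h]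
  simp_rw [hcoeff]
  rw [Finset.sum_comm, Finset.mul_sum]
  refine Finset.sum_congr rfl fun F hF => ?_
  set cov := coveredVerts V F with hcov
  have hmemcov : ∀ e ∈ F, ∀ v ∈ e, v ∈ cov := by
    intro e he v hv
    simp only [hcov, coveredVerts, Finset.mem_filter, Finset.mem_univ, true_and]
    exact ⟨e, he, hv⟩
  set D : Finset V := (S ∪ cov)ᶜ with hD
  set r : (V → Fin m) → ({x // x ∈ cov} → Fin m) := fun φ t => φ t with hr
  set Φ := Finset.univ.filter (fun φ : V → Fin m => ∀ s ∈ S, φ s = k) with hΦ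
  set Ψ := Finset.univ.filter (fun ψ : {x // x ∈ cov} → Fin m =>
    ∀ t : {x // x ∈ cov}, (t : V) ∈ S → ψ t = k) with hΨ
  have hmaps : ∀ φ ∈ Φ, r φ ∈ Ψ := by
    intro φ hφ
    simp only [hΨ, Finset.mem_filter, Finset.mem_univ, true_and]
    intro t ht
    exact (Finset.mem_filter.mp hφ).2 t ht
  have hmapeq : ∀ e ∈ F, ∀ φ : V → Fin m,
      Sym2.map φ e = Sym2.map (fun v : V => if h : v ∈ cov then r φ ⟨v, h⟩ else k) e := by
    intro e
    induction e using Sym2.ind with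
    | _ x y =>
      intro he φ
      have hx : x ∈ cov := hmemcov _ he x (Sym2.mem_mk_left _ _)
      have hy : y ∈ cov := hmemcov _ he y (Sym2.mem_mk_right _ _)
      rw [Sym2.map_pair_eq, Sym2.map_pair_eq, dif_pos hx, dif_pos hy]
  have hsplit : ∑ φ ∈ Φ, ∏ e ∈ F, (a e (e.map φ) - 1)
      = ∑ ψ ∈ Ψ, ∑ φ ∈ Φ.filter (fun φ => r φ = ψ), ∏ e ∈ F, (a e (e.map φ) - 1) :=
    (Finset.sum_fiberwise_of_maps_to hmaps _).symm
  have hfibcard : ∀ ψ ∈ Ψ, (Φ.filter (fun φ => r φ = ψ)).card = m ^ D.card := by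
    intro ψ hψ
    have hψk : ∀ t : {x // x ∈ cov}, (t : V) ∈ S → ψ t = k := by
      have := (Finset.mem_filter.mp hψ).2
      exact this
    have hcard : (Φ.filter (fun φ => r φ = ψ)).card
        = (Finset.univ : Finset ({x // x ∈ D} → Fin m)).card := by
      refine Finset.card_bij' (fun φ _ => fun d => φ d)
        (fun χ _ => fun v => if h : v ∈ cov then ψ ⟨v, h⟩ else
          if h : v ∈ D then χ ⟨v, h⟩ else k) (fun _ _ => Finset.mem_univ _) ?_ ?_ ?_
      · intro χ _
        simp only [Finset.mem_filter, Finset.mem_univ, true_and, hΦ]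
        constructor
        · intro s hs
          by_cases h : s ∈ cov
          · rw [dif_pos h]; exact hψk ⟨s, h⟩ hs
          · rw [dif_neg h, dif_neg]
            intro hd
            rw [hD, Finset.mem_compl] at hd
            exact hd (Finset.mem_union_left _ hs)
        · funext t
          simp only [hr]
          rw [dif_pos t.2]
      · intro φ hφ
        obtain ⟨hφ1, hφ2⟩ := Finset.mem_filter.mp hφ
        obtain ⟨_, hφk⟩ := Finset.mem_filter.mp hφ1
        funext v
        dsimp only
        by_cases h : v ∈ cov
        · rw [dif_pos h]
          rw [← hφ2]
        · rw [dif_neg h]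
          by_cases hd : v ∈ D
          · rw [dif_pos hd]
          · rw [dif_neg hd]
            have hvS : v ∈ S := by
              rw [hD, Finset.mem_compl, not_not] at hd
              rcases Finset.mem_union.mp hd with h1 | h2
              · exact h1
              · exact absurd h2 h
            exact (hφk v hvS).symm
      · intro χ _
        funext d
        have hd2 : (d : V) ∈ (S ∪ cov)ᶜ := d.2
        have hdc : (d : V) ∉ cov := fun hc =>
          (Finset.mem_compl.mp hd2) (Finset.mem_union_right _ hc)
        dsimp only
        rw [dif_neg hdc, dif_pos d.2]
    rw [hcard, Finset.card_univ, Fintype.card_fun, Fintype.card_fin, Fintype.card_coe]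
  have hsum2 : ∀ ψ ∈ Ψ, ∑ φ ∈ Φ.filter (fun φ => r φ = ψ), ∏ e ∈ F, (a e (e.map φ) - 1)
      = (m : ℂ) ^ D.card *
        ∏ e ∈ F, (a e (e.map (fun v : V => if h : v ∈ cov then ψ ⟨v, h⟩ else k)) - 1) := by
    intro ψ hψ
    calc ∑ φ ∈ Φ.filter (fun φ => r φ = ψ), ∏ e ∈ F, (a e (e.map φ) - 1)
        = ∑ φ ∈ Φ.filter (fun φ => r φ = ψ),
            ∏ e ∈ F, (a e (e.map (fun v : V => if h : v ∈ cov then ψ ⟨v, h⟩ else k)) - 1) := by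
          refine Finset.sum_congr rfl fun φ hφ => ?_
          have hrφ : r φ = ψ := (Finset.mem_filter.mp hφ).2
          refine Finset.prod_congr rfl fun e he => ?_
          rw [hmapeq e he φ, hrφ]
      _ = _ := by
          rw [Finset.sum_const, hfibcard ψ hψ, nsmul_eq_mul, Nat.cast_pow]
  have hcardsplit : Sᶜ.card = D.card + (cov \ S).card := by
    have hsub : cov \ S ⊆ Sᶜ := by
      intro v hv
      rw [Finset.mem_compl]
      exact (Finset.mem_sdiff.mp hv).2
    have hDeq : Sᶜ \ (cov \ S) = D := by
      ext v
      simp only [hD, Finset.mem_sdiff, Finset.mem_compl, Finset.mem_union]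
      tauto
    have := Finset.card_sdiff_add_card_eq_card hsub
    rw [hDeq] at this
    omega
  have hm0 : (m : ℂ) ≠ 0 := Nat.cast_ne_zero.mpr (by omega)
  have harith : ((m : ℂ) ^ Sᶜ.card)⁻¹ * (m : ℂ) ^ D.card
      = ((m : ℂ) ^ ((cov \ S).card))⁻¹ := by
    rw [hcardsplit, pow_add]
    field_simp
  rw [hsplit, Finset.mul_sum, Finset.mul_sum]
  refine Finset.sum_congr rfl fun ψ hψ => ?_
  rw [hsum2 ψ hψ, ← mul_assoc, harith]
end

section
/- Let G = (V,E) be a finite graph of maximum degree at most Δ, and suppose complex edge weights ω and vertex weights υ satisfy |1 - e^{±ω_e}| ≤ δ_{Δ+1} for all e ∈ E and |1 - e^{±υ_v}| ≤ δ_{Δ+1} for all v ∈ V (both signs). Then the Ising model partition function does not vanish: Z_Ising(G;ω,υ) = Σ_{σ∈{-1,+1}^V} exp(Σ_{{u,v}∈E} ω_{uv}σ_uσ_v + Σ_v υ_vσ_v) ≠ 0. (This may be derived from the nonvanishing of the restricted multivariate graph homomorphism partition function on graphs of maximum degree at most Δ+1 with matrix entries within distance δ_{Δ+1} of 1, via the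 gadget reduction with a^e_{ij} = e^{ω_e(2i-3)(2j-3)} and b^{e_v}_{ij} = e^{υ_v(2i-3)(2j-3)}.) -/
open scoped BigOperators

/-- The constant `δ_Δ = sup_{0 < α < 2π/(3Δ)} sin(α/2) cos(αΔ/2)`. -/
noncomputable def deltaDelta (Δ : ℕ) : ℝ :=
  sSup ((fun α : ℝ => Real.sin (α / 2) * Real.cos (α * Δ / 2)) ''
    Set.Ioo 0 (2 * Real.pi / (3 * Δ)))

/-- Spin `2i-3 ∈ {-1,+1}` of a state `i ∈ {1,2}`, encoded on `Fin 2` (`0 ↦ -1`, `1 ↦ +1`). -/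
noncomputable def spin (i : Fin 2) : ℂ := 2 * (i : ℕ) - 1

/-- Product of the spins of the endpoints of an unordered pair. -/
noncomputable def spinPair (s : Sym2 (Fin 2)) : ℂ := if s.IsDiag then 1 else -1

/-- The Ising model partition function `Z_Ising(G;ω,υ)`. -/
noncomputable def isingZ (V : Type) [Fintype V] [DecidableEq V] (E : Finset (Sym2 V))
    (ω : Sym2 V → ℂ) (υ : V → ℂ) : ℂ :=
  ∑ σ : V → Fin 2,
    Complex.exp (∑ e ∈ E, ω e * spinPair (e.map σ) + ∑ v : V, υ v * spin (σ v))

/-- The (multivariate) graph homomorphism partition function restricted to maps sending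
`S` to `k`, with symmetric `2 × 2` matrices encoded as functions on `Sym2 (Fin 2)`. -/
noncomputable def homRestricted2 (W : Type) [Fintype W] [DecidableEq W]
    (E : Finset (Sym2 W)) (b : Sym2 W → Sym2 (Fin 2) → ℂ) (S : Finset W) (k : Fin 2) : ℂ :=
  ∑ φ ∈ Finset.univ.filter (fun φ : W → Fin 2 => ∀ s ∈ S, φ s = k),
    ∏ e ∈ E, b e (e.map φ)

/-! Attach to every vertex `v` a pendant vertex `inr v`, which raises the maximum degree by one.
Put the matrix `(exp (ω e * σ σ'))` on each edge of `G`, the matrix `(exp (υ v * σ σ'))` on each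
pendant edge, and pin every pendant vertex to spin `+1`: the restricted homomorphism partition
function of this gadget is then, term by term, the Ising partition function, while every matrix
entry is one of `exp (± ω e)`, `exp (± υ v)` and hence lies within `δ_{Δ+1}` of `1`. -/

open Finset Function

def pendantEmbedding (V : Type) : V ↪ Sym2 (V ⊕ V) :=
  ⟨fun v => s(.inl v, .inr v), fun u v h => by simpa using h⟩

@[simp]
lemma pendantEmbedding_apply {V : Type} (v : V) :
    pendantEmbedding V v = s(.inl v, .inr v) := rfl

def pendantEdges (V : Type) [Fintype V] : Finset (Sym2 (V ⊕ V)) :=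
  univ.map (pendantEmbedding V)

section Gadget

variable {V : Type}

lemma card_filter_mem_map_inl_le [DecidableEq V] {Δ : ℕ} {E : Finset (Sym2 V)}
    (hdeg : ∀ v : V, #(E.filter (v ∈ ·)) ≤ Δ) (w : V ⊕ V) :
    #((E.map Embedding.inl.sym2Map).filter (w ∈ ·)) ≤ Δ := by
  rw [filter_map, card_map]
  rcases w with v | v
  · simpa [comp_def] using hdeg v
  · simp

lemma disjoint_map_inl_pendantEdges [Fintype V] (E : Finset (Sym2 V)) :
    Disjoint (E.map Embedding.inl.sym2Map) (pendantEdges V) := by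
  simp only [disjoint_left, pendantEdges, mem_map, mem_univ, true_and, not_exists]
  rintro _ ⟨e, -, rfl⟩ v h
  have : Sum.inr v ∈ pendantEmbedding V v := Sym2.mem_mk_right _ _
  rw [h] at this
  simp at this

variable [Fintype V] [DecidableEq V]

def gadgetEdges (E : Finset (Sym2 V)) : Finset (Sym2 (V ⊕ V)) :=
  E.map Embedding.inl.sym2Map ∪ pendantEdges V

lemma card_filter_mem_pendantEdges_le_one (w : V ⊕ V) :
    #((pendantEdges V).filter (w ∈ ·)) ≤ 1 := by
  rw [card_le_one]
  simp only [pendantEdges, mem_filter, mem_map, mem_univ, true_and]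
  rintro _ ⟨⟨u, rfl⟩, hu⟩ _ ⟨⟨v, rfl⟩, hv⟩
  rcases w with w | w <;> simp_all

lemma card_filter_mem_gadgetEdges_le {Δ : ℕ} {E : Finset (Sym2 V)}
    (hdeg : ∀ v : V, #(E.filter (v ∈ ·)) ≤ Δ) (w : V ⊕ V) :
    #((gadgetEdges E).filter (w ∈ ·)) ≤ Δ + 1 := by
  rw [gadgetEdges, filter_union]
  exact (card_union_le _ _).trans
    (add_le_add (card_filter_mem_map_inl_le hdeg w) (card_filter_mem_pendantEdges_le_one w))

end Gadget

section Weights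

variable {V : Type}

/-- Only the values on edges `e.map inl` and on pendant edges matter. -/
def gadgetWeight (ω : Sym2 V → ℂ) (υ : V → ℂ) : Sym2 (V ⊕ V) → ℂ :=
  Sym2.lift ⟨fun a b => match a, b with
    | .inl u, .inl w => ω s(u, w)
    | .inl _, .inr w => υ w
    | .inr u, .inl _ => υ u
    | .inr _, .inr _ => 0,
    by rintro (u | u) (w | w) <;> simp [Sym2.eq_swap]⟩

noncomputable def gadgetMatrix (ω : Sym2 V → ℂ) (υ : V → ℂ) :
    Sym2 (V ⊕ V) → Sym2 (Fin 2) → ℂ :=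
  fun e s => Complex.exp (gadgetWeight ω υ e * spinPair s)

@[simp]
lemma gadgetWeight_map_inl (ω : Sym2 V → ℂ) (υ : V → ℂ) (e : Sym2 V) :
    gadgetWeight ω υ (e.map Sum.inl) = ω e := by
  induction e using Sym2.ind with
  | _ u w => simp [gadgetWeight]

@[simp]
lemma gadgetWeight_pendant (ω : Sym2 V → ℂ) (υ : V → ℂ) (v : V) :
    gadgetWeight ω υ s(.inl v, .inr v) = υ v := by
  simp [gadgetWeight]

lemma spinPair_eq_one_or_neg_one (s : Sym2 (Fin 2)) : spinPair s = 1 ∨ spinPair s = -1 := by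
  unfold spinPair; split_ifs <;> simp

lemma spinPair_mk_one (i : Fin 2) : spinPair s(i, 1) = spin i := by
  fin_cases i <;> norm_num [spinPair, spin]

lemma norm_one_sub_exp_mul_spinPair_le {c : ℂ} {r : ℝ} (h : ‖1 - Complex.exp c‖ ≤ r)
    (h' : ‖1 - Complex.exp (-c)‖ ≤ r) (s : Sym2 (Fin 2)) :
    ‖1 - Complex.exp (c * spinPair s)‖ ≤ r := by
  rcases spinPair_eq_one_or_neg_one s with hs | hs <;> simpa [hs]

lemma norm_one_sub_gadgetMatrix_le [Fintype V] [DecidableEq V] {r : ℝ} {E : Finset (Sym2 V)}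
    {ω : Sym2 V → ℂ} {υ : V → ℂ}
    (hω : ∀ e ∈ E, ‖1 - Complex.exp (ω e)‖ ≤ r ∧ ‖1 - Complex.exp (-(ω e))‖ ≤ r)
    (hυ : ∀ v : V, ‖1 - Complex.exp (υ v)‖ ≤ r ∧ ‖1 - Complex.exp (-(υ v))‖ ≤ r) :
    ∀ e ∈ gadgetEdges E, ∀ s, ‖1 - gadgetMatrix ω υ e s‖ ≤ r := by
  simp only [gadgetEdges, pendantEdges, mem_union, mem_map, mem_univ, true_and]
  rintro _ (⟨e, he, rfl⟩ | ⟨v, rfl⟩) s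
  · simpa [gadgetMatrix] using norm_one_sub_exp_mul_spinPair_le (hω e he).1 (hω e he).2 s
  · simpa [gadgetMatrix] using norm_one_sub_exp_mul_spinPair_le (hυ v).1 (hυ v).2 s

end Weights

lemma sum_filter_inr_eq_const_eq_sum_elim {V W α M : Type*} [Fintype V] [DecidableEq V] [Fintype W]
    [DecidableEq W] [Fintype α] [DecidableEq α] [AddCommMonoid M] (k : α)
    (f : (V ⊕ W → α) → M) :
    ∑ φ ∈ univ.filter (fun φ : V ⊕ W → α => ∀ s ∈ univ.map Embedding.inr, φ s = k), f φ =
      ∑ σ : V → α, f (Sum.elim σ fun _ => k) := by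
  symm
  refine sum_nbij' (fun σ => Sum.elim σ fun _ => k) (fun φ => φ ∘ Sum.inl) ?_ ?_ ?_ ?_ ?_
  · simp
  · simp
  · simp
  · simp only [mem_filter, mem_univ, mem_map, Embedding.inr_apply, true_and]
    rintro φ hφ
    ext (v | w)
    · rfl
    · exact (hφ _ ⟨w, rfl⟩).symm
  · simp

theorem isingZ_eq_homRestricted2 {V : Type} [Fintype V] [DecidableEq V] (E : Finset (Sym2 V))
    (ω : Sym2 V → ℂ) (υ : V → ℂ) :
    isingZ V E ω υ =
      homRestricted2 (V ⊕ V) (gadgetEdges E) (gadgetMatrix ω υ) (univ.map Embedding.inr) 1 := by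
  rw [isingZ, homRestricted2, sum_filter_inr_eq_const_eq_sum_elim]
  refine sum_congr rfl fun σ _ => ?_
  rw [gadgetEdges, prod_union (disjoint_map_inl_pendantEdges E), pendantEdges, prod_map, prod_map,
    Complex.exp_add, Complex.exp_sum, Complex.exp_sum]
  congr 1
  · refine prod_congr rfl fun e _ => ?_
    simp [gadgetMatrix, Sym2.map_map]
  · refine prod_congr rfl fun v _ => ?_
    simp [gadgetMatrix, spinPair_mk_one]

/-- if `G` has maximum degree at most `Δ` and all weights satisfy
`|1 - e^{±ω_e}| ≤ δ_{Δ+1}` and `|1 - e^{±υ_v}| ≤ δ_{Δ+1}`, then `Z_Ising(G;ω,υ) ≠ 0`.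
Barvinok's nonvanishing theorem for the restricted multivariate graph homomorphism
partition function (on graphs over `V ⊕ V` of max degree `≤ Δ+1` with all matrix
entries within `δ_{Δ+1}` of `1`) is taken as the hypothesis `hB`. -/
theorem ising_nonvanishing (V : Type) [Fintype V] [DecidableEq V] (Δ : ℕ)
    (E : Finset (Sym2 V))
    (hdeg : ∀ v : V, (E.filter (fun e => v ∈ e)).card ≤ Δ)
    (ω : Sym2 V → ℂ) (υ : V → ℂ)
    (hω : ∀ e ∈ E, ‖1 - Complex.exp (ω e)‖ ≤ deltaDelta (Δ + 1) ∧
      ‖1 - Complex.exp (-(ω e))‖ ≤ deltaDelta (Δ + 1))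
    (hυ : ∀ v : V, ‖1 - Complex.exp (υ v)‖ ≤ deltaDelta (Δ + 1) ∧
      ‖1 - Complex.exp (-(υ v))‖ ≤ deltaDelta (Δ + 1))
    (hB : ∀ (E' : Finset (Sym2 (V ⊕ V))) (b : Sym2 (V ⊕ V) → Sym2 (Fin 2) → ℂ)
        (S' : Finset (V ⊕ V)) (k : Fin 2),
      (∀ w : V ⊕ V, (E'.filter (fun e => w ∈ e)).card ≤ Δ + 1) →
      (∀ e ∈ E', ∀ s : Sym2 (Fin 2), ‖1 - b e s‖ ≤ deltaDelta (Δ + 1)) →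
      homRestricted2 (V ⊕ V) E' b S' k ≠ 0) :
    isingZ V E ω υ ≠ 0 := by
  rw [isingZ_eq_homRestricted2]
  exact hB _ _ _ _ (card_filter_mem_gadgetEdges_le hdeg) (norm_one_sub_gadgetMatrix_le hω hυ)
end
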